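/- Derivability of generalized joint responsibility: for any n ≥ 0, pairwise disjoint coalitions D₁,…,Dₙ, reals t₁,…,tₙ ≥ 0, and formulas χ₁,…,χₙ, the hypotheses ̄N B^{t₁}_{D₁}χ₁, …, ̄N B^{tₙ}_{Dₙ}χₙ and χ₁ ∨ … ∨ χₙ derive B^{t₁+…+tₙ}_{D₁∪…∪Dₙ}(χ₁ ∨ … ∨ χₙ) in the proof system. -/

import Mathlib

/-- Formulas of the logic of blameworthiness with sacrifice over agent type `A`:
propositional variables, negation, implication, the universal modality `N`,
and the blameworthiness modality `B s C φ` ("coalition `C` is blameable for `φ`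
with degree (sacrifice) `s`"). -/
inductive Formula (A : Type) : Type where
  | var : ℕ → Formula A
  | neg : Formula A → Formula A
  | impl : Formula A → Formula A → Formula A
  | N : Formula A → Formula A
  | B : ℝ → Finset A → Formula A → Formula A

namespace Formula

/-- Disjunction, defined as usual. -/
def or {A : Type} (φ ψ : Formula A) : Formula A := (φ.neg).impl ψ

/-- Conjunction, defined as usual. -/
def and {A : Type} (φ ψ : Formula A) : Formula A := (φ.impl ψ.neg).neg

/-- The modality `N̄ φ := ¬ N ¬ φ` ("φ holds at some play"). -/
def nbar {A : Type} (φ : Formula A) : Formula A := (Formula.N φ.neg).neg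

/-- A contradictory formula (used as the empty disjunction). -/
def fbot {A : Type} : Formula A := ((Formula.var 0).impl (Formula.var 0)).neg

end Formula

/-- Finite disjunction `χ₁ ∨ ⋯ ∨ χₙ` of a list of formulas. -/
def bigOr {A : Type} : List (Formula A) → Formula A
  | [] => Formula.fbot
  | φ :: l => l.foldl Formula.or φ

/-- A game `(Δ, ‖·‖, d₀, Ω, P, π)`: a nonempty set of actions `Δ` with
nonnegative costs and a zero-cost action `d₀`, a set of outcomes `Ω`,
a set of plays `P` (pairs of a complete action profile and an outcome),
and a valuation `π` of propositional variables by sets of plays. -/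
structure Game (A : Type) where
  Δ : Type
  Ω : Type
  cost : Δ → ℝ
  cost_nonneg : ∀ d : Δ, 0 ≤ cost d
  d0 : Δ
  cost_d0 : cost d0 = 0
  P : Set ((A → Δ) × Ω)
  π : ℕ → Set ((A → Δ) × Ω)

/-- Satisfaction relation `(δ,ω) ⊨ φ`.  In particular
`(δ,ω) ⊨ B s C φ` iff `(δ,ω) ⊨ φ` and there is an action profile `γ` of the
coalition `C` of total cost `∑ a ∈ C, ‖γ(a)‖ ≤ s` such that every play
agreeing with `γ` on `C` falsifies `φ`. -/
def Sat {A : Type} (G : Game A) : ((A → G.Δ) × G.Ω) → Formula A → Prop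
  | p, .var n => p ∈ G.π n
  | p, .neg φ => ¬ Sat G p φ
  | p, .impl φ ψ => Sat G p φ → Sat G p ψ
  | _, .N φ => ∀ q ∈ G.P, Sat G q φ
  | p, .B s C φ => Sat G p φ ∧ ∃ γ : A → G.Δ,
      (∑ a ∈ C, G.cost (γ a)) ≤ s ∧
      ∀ q ∈ G.P, (∀ a ∈ C, q.1 a = γ a) → ¬ Sat G q φ

/-- A formula is a propositional tautology if it evaluates to true under every
Boolean valuation of formulas that respects negation and implication. -/
def Tautology {A : Type} (φ : Formula A) : Prop :=
  ∀ v : Formula A → Bool,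
    (∀ ψ : Formula A, v ψ.neg = !(v ψ)) →
    (∀ ψ χ : Formula A, v (ψ.impl χ) = (!(v ψ) || v χ)) →
    v φ = true

/-- Theorems of the logic of blameworthiness with sacrifice: propositional
tautologies, the Truth, Distributivity, Negative Introspection, None to Blame,
Monotonicity, Joint Responsibility, Blame for Cause, and Fairness axioms,
closed under Modus Ponens and Necessitation. -/
inductive Prov {A : Type} [DecidableEq A] : Formula A → Prop
  | taut {φ : Formula A} : Tautology φ → Prov φ
  | truthN {φ : Formula A} : Prov ((Formula.N φ).impl φ)
  | truthB {s : ℝ} {C : Finset A} {φ : Formula A} (hs : 0 ≤ s) :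
      Prov ((Formula.B s C φ).impl φ)
  | distr {φ ψ : Formula A} :
      Prov ((Formula.N (φ.impl ψ)).impl ((Formula.N φ).impl (Formula.N ψ)))
  | negIntro {φ : Formula A} :
      Prov (((Formula.N φ).neg).impl (Formula.N ((Formula.N φ).neg)))
  | noneToBlame {s : ℝ} {φ : Formula A} (hs : 0 ≤ s) :
      Prov ((Formula.B s (∅ : Finset A) φ).neg)
  | mono {s t : ℝ} {C D : Finset A} {φ : Formula A}
      (hs : 0 ≤ s) (hst : s ≤ t) (hCD : C ⊆ D) :
      Prov ((Formula.B s C φ).impl (Formula.B t D φ))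
  | joint {s t : ℝ} {C D : Finset A} {φ ψ : Formula A}
      (hs : 0 ≤ s) (ht : 0 ≤ t) (hCD : Disjoint C D) :
      Prov (((Formula.B s C φ).nbar.and (Formula.B t D ψ).nbar).impl
        ((φ.or ψ).impl (Formula.B (s + t) (C ∪ D) (φ.or ψ))))
  | cause {s : ℝ} {C : Finset A} {φ ψ : Formula A} (hs : 0 ≤ s) :
      Prov ((Formula.N (φ.impl ψ)).impl
        ((Formula.B s C ψ).impl (φ.impl (Formula.B s C φ))))
  | fair {s : ℝ} {C : Finset A} {φ : Formula A} (hs : 0 ≤ s) :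
      Prov ((Formula.B s C φ).impl (Formula.N (φ.impl (Formula.B s C φ))))
  | mp {φ ψ : Formula A} : Prov (φ.impl ψ) → Prov φ → Prov ψ
  | nec {φ : Formula A} : Prov φ → Prov (Formula.N φ)

/-- Derivability `X ⊢ φ` from a set of hypotheses: hypotheses and theorems of
the logic, closed under Modus Ponens. -/
inductive Derives {A : Type} [DecidableEq A] (X : Set (Formula A)) : Formula A → Prop
  | hyp {φ : Formula A} : φ ∈ X → Derives X φ
  | thm {φ : Formula A} : Prov φ → Derives X φ
  | mp {φ ψ : Formula A} : Derives X (φ.impl ψ) → Derives X φ → Derives X ψ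

/-!
The binary axiom needs `N̄`-hypotheses but concludes only `B`, so it cannot be iterated as it
stands. One modal level up it can: Negative Introspection makes each `N̄ B^t_D χ` necessary, and
Necessitation with Distributivity turns the axiom into
`N̄ B^s_C φ → N̄ B^t_D ψ → N̄ B^{s+t}_{C∪D}(φ ∨ ψ)`, which folds along the list. At the end,
Fairness and the S5 collapse `N̄ N ψ → N ψ` turn `N̄ B^s_C φ` into `N (φ → B^s_C φ)`, which the
hypothesis `χ₁ ∨ ⋯ ∨ χₙ` discharges (for `n = 0` that hypothesis is the contradiction `fbot`).
-/

open Formula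

variable {A : Type} [DecidableEq A]

namespace Prov

theorem contrapose (φ ψ : Formula A) : Prov ((φ.impl ψ).impl (ψ.neg.impl φ.neg)) :=
  taut fun v hn hi => by simp only [hi, hn]; cases v φ <;> cases v ψ <;> rfl

theorem and_intro (φ ψ : Formula A) : Prov (φ.impl (ψ.impl (φ.and ψ))) :=
  taut fun v hn hi => by simp only [Formula.and, hi, hn]; cases v φ <;> cases v ψ <;> rfl

theorem or_inl (φ ψ : Formula A) : Prov (φ.impl (φ.or ψ)) :=
  taut fun v hn hi => by simp only [Formula.or, hi, hn]; cases v φ <;> cases v ψ <;> rfl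

theorem fbot_elim (φ : Formula A) : Prov ((fbot : Formula A).impl φ) :=
  taut fun v hn hi => by
    simp only [fbot, hi, hn]; cases v (var 0 : Formula A) <;> cases v φ <;> rfl

/-- The contrapositive of Negative Introspection. -/
theorem N_of_nbar_N (φ : Formula A) : Prov ((N φ).nbar.impl (N φ)) :=
  mp (taut fun v hn hi => by
    simp only [nbar, hi, hn]; cases v (N φ) <;> cases v (N (N φ).neg) <;> rfl) negIntro

end Prov

namespace Derives

variable {X : Set (Formula A)} {φ ψ : Formula A}

theorem mp_thm (h : Prov (φ.impl ψ)) (hφ : Derives X φ) : Derives X ψ :=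
  mp (thm h) hφ

theorem N_mp (h : Derives X (N (φ.impl ψ))) (hφ : Derives X (N φ)) : Derives X (N ψ) :=
  mp (mp (thm Prov.distr) h) hφ

theorem N_and (hφ : Derives X (N φ)) (hψ : Derives X (N ψ)) : Derives X (N (φ.and ψ)) :=
  N_mp (N_mp (thm (Prov.nec (Prov.and_intro φ ψ))) hφ) hψ

theorem N_nbar (h : Derives X φ.nbar) : Derives X (N φ.nbar) :=
  mp_thm Prov.negIntro h

theorem nbar_mp (h : Derives X (N (φ.impl ψ))) (hφ : Derives X φ.nbar) : Derives X ψ.nbar :=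
  have hneg : Derives X (N (ψ.neg.impl φ.neg)) := N_mp (thm (Prov.nec (Prov.contrapose φ ψ))) h
  mp (mp_thm (Prov.contrapose _ _) (mp (thm Prov.distr) hneg)) hφ

theorem nbar_mono (h : Prov (φ.impl ψ)) (hφ : Derives X φ.nbar) : Derives X ψ.nbar :=
  nbar_mp (thm (Prov.nec h)) hφ

theorem blame_of_nbar_blame {s : ℝ} {C : Finset A} (hs : 0 ≤ s)
    (hB : Derives X (B s C φ).nbar) (hφ : Derives X φ) : Derives X (B s C φ) :=
  have hN : Derives X (N (φ.impl (B s C φ))) :=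
    mp_thm (Prov.N_of_nbar_N _) (nbar_mono (Prov.fair hs) hB)
  mp (mp_thm Prov.truthN hN) hφ

theorem nbar_blame_or {s t : ℝ} {C D : Finset A} (hs : 0 ≤ s) (ht : 0 ≤ t)
    (hCD : Disjoint C D) (hφ : Derives X (B s C φ).nbar) (hψ : Derives X (B t D ψ).nbar) :
    Derives X (B (s + t) (C ∪ D) (φ.or ψ)).nbar :=
  have hjoint : Derives X (N ((φ.or ψ).impl (B (s + t) (C ∪ D) (φ.or ψ)))) :=
    N_mp (thm (Prov.nec (Prov.joint hs ht hCD))) (N_and (N_nbar hφ) (N_nbar hψ))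
  nbar_mp hjoint (nbar_mono (Prov.or_inl φ ψ) (nbar_mono (Prov.truthB hs) hφ))

theorem nbar_blame_foldl_or (l : List (ℝ × Finset A × Formula A)) {s : ℝ} {C : Finset A}
    (hs : 0 ≤ s) (ht : ∀ x ∈ l, 0 ≤ x.1) (hC : ∀ x ∈ l, Disjoint C x.2.1)
    (hdisj : l.Pairwise fun x y => Disjoint x.2.1 y.2.1)
    (hφ : Derives X (B s C φ).nbar) (hl : ∀ x ∈ l, Derives X (B x.1 x.2.1 x.2.2).nbar) :
    Derives X (B (s + (l.map fun x => x.1).sum)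
      (C ∪ (l.map fun x => x.2.1).foldr (· ∪ ·) ∅)
      ((l.map fun x => x.2.2).foldl Formula.or φ)).nbar := by
  induction l generalizing s C φ with
  | nil => simpa using hφ
  | cons y l ih =>
    simp only [List.forall_mem_cons, List.pairwise_cons] at ht hC hdisj hl
    have hstep := nbar_blame_or hs ht.1 hC.1 hφ hl.1
    have hC' : ∀ x ∈ l, Disjoint (C ∪ y.2.1) x.2.1 := fun x hx =>
      Finset.disjoint_union_left.2 ⟨hC.2 x hx, hdisj.1 x hx⟩
    simpa only [List.map_cons, List.sum_cons, List.foldr_cons, List.foldl_cons, add_assoc,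
      Finset.union_assoc] using ih (add_nonneg hs ht.1) ht.2 hC' hdisj.2 hstep hl.2

theorem blame_bigOr (l : List (ℝ × Finset A × Formula A)) (ht : ∀ x ∈ l, 0 ≤ x.1)
    (hdisj : l.Pairwise fun x y => Disjoint x.2.1 y.2.1)
    (hl : ∀ x ∈ l, Derives X (B x.1 x.2.1 x.2.2).nbar)
    (hor : Derives X (bigOr (l.map fun x => x.2.2))) :
    Derives X (B (l.map fun x => x.1).sum ((l.map fun x => x.2.1).foldr (· ∪ ·) ∅)
      (bigOr (l.map fun x => x.2.2))) := by
  cases l with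
  | nil => exact mp_thm (Prov.fbot_elim _) hor
  | cons x l =>
    simp only [List.forall_mem_cons, List.pairwise_cons] at ht hdisj hl
    have hsum : 0 ≤ x.1 + (l.map fun y => y.1).sum :=
      add_nonneg ht.1 (List.sum_nonneg (by simpa using ht.2))
    exact blame_of_nbar_blame hsum (nbar_blame_foldl_or l ht.1 ht.2 hdisj.1 hdisj.2 hl.1 hl.2) hor

end Derives

/-- Generalized joint responsibility is derivable: for pairwise
disjoint coalitions `D₁,…,Dₙ`, reals `t₁,…,tₙ ≥ 0` and formulas `χ₁,…,χₙ`
(a list `l` of triples), the hypotheses `N̄ B^{tᵢ}_{Dᵢ} χᵢ` together with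
`χ₁ ∨ ⋯ ∨ χₙ` derive `B^{t₁+⋯+tₙ}_{D₁∪⋯∪Dₙ}(χ₁ ∨ ⋯ ∨ χₙ)`. -/
theorem generalized_joint_responsibility_derivable {A : Type} [DecidableEq A]
    (l : List (ℝ × Finset A × Formula A))
    (ht : ∀ x ∈ l, 0 ≤ x.1)
    (hdisj : l.Pairwise fun x y => Disjoint x.2.1 y.2.1) :
    Derives
      ({χ : Formula A | ∃ x ∈ l, χ = (Formula.B x.1 x.2.1 x.2.2).nbar} ∪
        {bigOr (l.map fun x => x.2.2)})
      (Formula.B ((l.map fun x => x.1).sum)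
        ((l.map fun x => x.2.1).foldr (· ∪ ·) ∅)
        (bigOr (l.map fun x => x.2.2))) :=
  Derives.blame_bigOr l ht hdisj (fun x hx => Derives.hyp (Or.inl ⟨x, hx, rfl⟩))
    (Derives.hyp (Or.inr rfl))
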